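/- Let k(z) = a z + λ ∫_0^∞ (e^{−xz} − 1) dF(x), where a > 0, λ > 0 and F is the distribution function of a strictly positive random variable. Then for every s > 0 the equation k(z) = s has exactly one root z = c(s) in the half-plane Re z > 0, and this root is real and positive. -/

import Mathlib

open MeasureTheory Real Set Filter
open scoped Topology

noncomputable section

/-- The Laplace exponent `k(z) = a z + λ ∫ (e^{-xz} - 1) dF(x)` of a compound Poisson
process with drift `-a`, jump rate `lam` and jump distribution `μ`. -/
def lapExp (a lam : ℝ) (μ : MeasureTheory.Measure ℝ) (z : ℂ) : ℂ :=
  a * z + lam * ∫ x : ℝ, (Complex.exp (-(x * z)) - 1) ∂μ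

variable {Ω : Type*} [MeasurableSpace Ω]

/-- `ξ` is a compound Poisson process with negative drift `-a`, jump rate `lam` and
jump distribution `μ` (a probability measure concentrated on `(0,∞)`), under the
probability measure `P`: it starts at `0`, has right-continuous paths, stationary
independent increments, and the one-dimensional Laplace transforms
`E e^{-z ξ(t)} = e^{t k(z)}` prescribed by the Laplace exponent. -/
structure IsCPP (P : Measure Ω) (a lam : ℝ) (μ : Measure ℝ) (ξ : ℝ → Ω → ℝ) : Prop where
  ha : 0 < a
  hlam : 0 < lam
  hprob : IsProbabilityMeasure μ
  hpos : μ (Set.Iic 0) = 0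
  hmeas : ∀ t, Measurable (ξ t)
  hzero : ∀ ω, ξ 0 ω = 0
  hrc : ∀ ω t, ContinuousWithinAt (fun u => ξ u ω) (Set.Ici t) t
  hstat : ∀ u t : ℝ, 0 ≤ u → 0 ≤ t →
    Measure.map (fun ω => ξ (u + t) ω - ξ u ω) P = Measure.map (ξ t) P
  hindep : ∀ (n : ℕ) (t : ℕ → ℝ), Monotone t → (∀ i, 0 ≤ t i) →
    ProbabilityTheory.iIndepFun
      (fun (i : Fin n) ω => ξ (t (i.1 + 1)) ω - ξ (t i.1) ω) P
  hlaplace : ∀ t : ℝ, 0 ≤ t → ∀ z : ℂ, 0 ≤ z.re →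
    ∫ ω, Complex.exp (-(z * ξ t ω)) ∂P = Complex.exp (t * lapExp a lam μ z)

/-- `c s` is, for each `s > 0`, the unique root of `k(z) = s` in the half-plane
`Re z > 0`, and it is real and positive. -/
def IsUniqueRoot (a lam : ℝ) (μ : Measure ℝ) (c : ℝ → ℝ) : Prop :=
  ∀ s : ℝ, 0 < s → 0 < c s ∧ lapExp a lam μ (c s) = s ∧
    ∀ z : ℂ, 0 < z.re → lapExp a lam μ z = s → z = c s

/-- `R s` is the resolvent (scale function) of the compound Poisson process with
Laplace exponent `k`: it vanishes on `(-∞,0)`, takes the value `1/a` at `0`, and its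
Laplace transform is `(k(z) - s)⁻¹` for `Re z > c(s)`. -/
def IsResolvent (a lam : ℝ) (μ : Measure ℝ) (c : ℝ → ℝ) (R : ℝ → ℝ → ℝ) : Prop :=
  ∀ s : ℝ, 0 < s →
    (∀ x : ℝ, x < 0 → R s x = 0) ∧ R s 0 = 1 / a ∧ (∀ x, 0 ≤ R s x) ∧
    ∀ z : ℂ, c s < z.re →
      ∫ x in Set.Ioi (0:ℝ), Complex.exp (-(x * z)) * (R s x : ℂ) = (lapExp a lam μ z - s)⁻¹

/-- First passage time of the level `-x` by `ξ` (defined as an infimum; it is a junk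
value off the event `hitsMinus ξ x`). -/
def tauMinus (ξ : ℝ → Ω → ℝ) (x : ℝ) (ω : Ω) : ℝ := sInf {t | 0 ≤ t ∧ ξ t ω ≤ -x}

/-- The event that `ξ` ever passes below `-x` (i.e. `τ⁻(x) < ∞`). -/
def hitsMinus (ξ : ℝ → Ω → ℝ) (x : ℝ) : Set Ω := {ω | ∃ t, 0 ≤ t ∧ ξ t ω ≤ -x}

/-- First crossing time of the level `x` by `ξ`. -/
def tauPlus (ξ : ℝ → Ω → ℝ) (x : ℝ) (ω : Ω) : ℝ := sInf {t | 0 ≤ t ∧ x < ξ t ω}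

/-- The event that `ξ` ever crosses the level `x` (i.e. `τ⁺(x) < ∞`). -/
def hitsPlus (ξ : ℝ → Ω → ℝ) (x : ℝ) : Set Ω := {ω | ∃ t, 0 ≤ t ∧ x < ξ t ω}

/-- The overshoot `T⁺(x) = ξ(τ⁺(x)) - x` of `ξ` over the level `x`. -/
def overshoot (ξ : ℝ → Ω → ℝ) (x : ℝ) (ω : Ω) : ℝ := ξ (tauPlus ξ x ω) ω - x

/-!
On the positive half-line `k` is real, continuous and convex with `k 0 = 0` and
`k r ≥ a r - λ`, so `k c = s` has a root `c > 0`, and `k < s` on `(0, c)`. If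
`k z = s` with `Re z > 0`, then `s = Re k z ≤ k (Re z)` forces `Re z ≥ c`. On the
half-plane `Re z ≥ c` the jump part of `k` is Lipschitz with constant
`λ ∫ x e^{-xc} dF(x) = a - k'(c)`, while convexity gives `0 < s = k c ≤ c k'(c)`;
hence `‖k z - k c‖ ≥ k'(c) ‖z - c‖`, and `k z = k c` forces `z = c`.
-/

theorem Complex.norm_exp_sub_one_le_norm_of_re_nonpos {w : ℂ} (hw : w.re ≤ 0) :
    ‖Complex.exp w - 1‖ ≤ ‖w‖ := by
  have hderiv : ∀ t ∈ Icc (0 : ℝ) 1, HasDerivWithinAt (fun t : ℝ => Complex.exp (t * w))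
      (w * Complex.exp (t * w)) (Icc 0 1) t := fun t _ => by
    simpa [mul_comm] using
      ((Complex.ofRealCLM.hasDerivAt (x := t)).mul_const w).cexp.hasDerivWithinAt
  have hbound : ∀ t ∈ Icc (0 : ℝ) 1, ‖w * Complex.exp (t * w)‖ ≤ ‖w‖ := fun t ht => by
    rw [norm_mul, Complex.norm_exp]
    refine mul_le_of_le_one_right (norm_nonneg w) (Real.exp_le_one_iff.2 ?_)
    simpa using mul_nonpos_of_nonneg_of_nonpos ht.1 hw
  simpa using Convex.norm_image_sub_le_of_norm_hasDerivWithin_le hderiv hbound (convex_Icc 0 1)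
    (left_mem_Icc.2 zero_le_one) (right_mem_Icc.2 zero_le_one)

theorem norm_cexp_neg_mul_le_one {x : ℝ} (hx : 0 ≤ x) {z : ℂ} (hz : 0 ≤ z.re) :
    ‖Complex.exp (-(x * z))‖ ≤ 1 := by
  rw [Complex.norm_exp, Real.exp_le_one_iff]
  simpa using mul_nonneg hx hz

theorem norm_cexp_neg_mul_sub_cexp_neg_mul_le {x : ℝ} (hx : 0 ≤ x) {w z : ℂ}
    (hwz : w.re ≤ z.re) :
    ‖Complex.exp (-(x * w)) - Complex.exp (-(x * z))‖
      ≤ x * Real.exp (-(x * w.re)) * ‖z - w‖ := by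
  have hsplit : Complex.exp (-(x * w)) - Complex.exp (-(x * z))
      = Complex.exp (-(x * w)) * (1 - Complex.exp (-(x * (z - w)))) := by
    rw [mul_sub, ← Complex.exp_add]; ring_nf
  have hre : (-(x * (z - w))).re ≤ 0 := by
    simpa using mul_nonneg hx (sub_nonneg.2 hwz)
  have hnorm : ‖-((x : ℂ) * (z - w))‖ = x * ‖z - w‖ := by
    rw [norm_neg, norm_mul, Complex.norm_real, Real.norm_of_nonneg hx]
  rw [hsplit, norm_mul, Complex.norm_exp, norm_sub_rev, mul_comm x, mul_assoc, ← hnorm]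
  gcongr
  · simp
  · exact Complex.norm_exp_sub_one_le_norm_of_re_nonpos hre

theorem Real.exp_neg_mul_sub_one_le_div_mul {x r c : ℝ} (hr : 0 ≤ r) (hrc : r ≤ c) (hc : 0 < c) :
    Real.exp (-(x * r)) - 1 ≤ r / c * (Real.exp (-(x * c)) - 1) := by
  have hθ : r / c ≤ 1 := (div_le_one hc).2 hrc
  have h := convexOn_exp.2 (mem_univ (-(x * c))) (mem_univ 0) (div_nonneg hr hc.le)
    (sub_nonneg.2 hθ) (add_sub_cancel _ _)
  have harg : (r / c) • -(x * c) + (1 - r / c) • (0 : ℝ) = -(x * r) := by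
    simp only [smul_eq_mul, mul_zero, add_zero]; field_simp
  rw [harg, smul_eq_mul, smul_eq_mul, Real.exp_zero] at h
  linarith

theorem Real.mul_exp_neg_le_one_sub_exp_neg (u : ℝ) : u * Real.exp (-u) ≤ 1 - Real.exp (-u) := by
  have h := mul_le_mul_of_nonneg_right (Real.add_one_le_exp u) (Real.exp_pos (-u)).le
  rw [← Real.exp_add, add_neg_cancel, Real.exp_zero, add_mul, one_mul] at h
  linarith

def realLapExp (a lam : ℝ) (μ : Measure ℝ) (r : ℝ) : ℝ :=
  a * r + lam * ∫ x, (Real.exp (-(x * r)) - 1) ∂μ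

section LaplaceExponent

variable {a lam : ℝ} {μ : Measure ℝ}

theorem lapExp_ofReal (r : ℝ) : lapExp a lam μ r = realLapExp a lam μ r := by
  rw [lapExp, realLapExp, Complex.ofReal_add, Complex.ofReal_mul, Complex.ofReal_mul,
    ← integral_complex_ofReal]
  push_cast
  rfl

theorem realLapExp_zero : realLapExp a lam μ 0 = 0 := by
  simp [realLapExp]

variable [IsFiniteMeasure μ]

theorem integrable_exp_neg_mul_sub_one (hμ : ∀ᵐ x ∂μ, 0 ≤ x) {r : ℝ} (hr : 0 ≤ r) :
    Integrable (fun x => Real.exp (-(x * r)) - 1) μ := by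
  refine (Integrable.of_bound (by fun_prop) 1 ?_).sub (integrable_const 1)
  filter_upwards [hμ] with x hx
  rw [Real.norm_of_nonneg (Real.exp_pos _).le, Real.exp_le_one_iff, neg_nonpos]
  exact mul_nonneg hx hr

theorem integrable_cexp_neg_mul_sub_one (hμ : ∀ᵐ x ∂μ, 0 ≤ x) {z : ℂ} (hz : 0 ≤ z.re) :
    Integrable (fun x : ℝ => Complex.exp (-(x * z)) - 1) μ := by
  refine (Integrable.of_bound (by fun_prop) 1 ?_).sub (integrable_const 1)
  filter_upwards [hμ] with x hx using norm_cexp_neg_mul_le_one hx hz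

theorem integrable_mul_exp_neg_mul (hμ : ∀ᵐ x ∂μ, 0 ≤ x) {c : ℝ} (hc : 0 < c) :
    Integrable (fun x => x * Real.exp (-(x * c))) μ := by
  refine Integrable.of_bound (by fun_prop) (1 / c) ?_
  filter_upwards [hμ] with x hx
  rw [Real.norm_of_nonneg (by positivity), le_div_iff₀ hc]
  have := Real.mul_exp_neg_le_one_sub_exp_neg (x * c)
  nlinarith [Real.exp_pos (-(x * c))]

theorem continuousOn_realLapExp (hμ : ∀ᵐ x ∂μ, 0 ≤ x) :
    ContinuousOn (realLapExp a lam μ) (Ici 0) := by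
  refine (continuousOn_const.mul continuousOn_id).add (continuousOn_const.mul ?_)
  refine continuousOn_of_dominated (bound := fun _ => 2) (fun _ _ => by fun_prop)
    (fun r hr => ?_) (integrable_const 2) (ae_of_all _ fun _ => by fun_prop)
  filter_upwards [hμ] with x hx
  have h1 : Real.exp (-(x * r)) ≤ 1 := Real.exp_le_one_iff.2 (neg_nonpos.2 (mul_nonneg hx hr))
  rw [Real.norm_eq_abs, abs_le]
  constructor <;> linarith [Real.exp_pos (-(x * r))]

theorem sub_le_realLapExp (hμ : ∀ᵐ x ∂μ, 0 ≤ x) (hlam : 0 ≤ lam) {r : ℝ} (hr : 0 ≤ r) :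
    a * r - lam * μ.real univ ≤ realLapExp a lam μ r := by
  have h : -μ.real univ ≤ ∫ x, (Real.exp (-(x * r)) - 1) ∂μ := by
    rw [show -μ.real univ = ∫ _, (-1 : ℝ) ∂μ by simp]
    exact integral_mono (integrable_const _) (integrable_exp_neg_mul_sub_one hμ hr)
      fun x => by simp [(Real.exp_pos _).le]
  rw [realLapExp]
  nlinarith

theorem exists_realLapExp_eq (hμ : ∀ᵐ x ∂μ, 0 ≤ x) (ha : 0 < a) (hlam : 0 ≤ lam) {s : ℝ}
    (hs : 0 ≤ s) : ∃ c, 0 ≤ c ∧ realLapExp a lam μ c = s := by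
  set R := (s + lam * μ.real univ) / a
  have hR : 0 ≤ R := by positivity
  have hsR : s ≤ realLapExp a lam μ R := by
    have := sub_le_realLapExp (a := a) hμ hlam hR
    rwa [mul_div_cancel₀ _ ha.ne', add_sub_cancel_right] at this
  obtain ⟨c, hc, hkc⟩ := intermediate_value_Icc hR
    ((continuousOn_realLapExp hμ).mono Icc_subset_Ici_self) ⟨realLapExp_zero.trans_le hs, hsR⟩
  exact ⟨c, hc.1, hkc⟩

theorem re_lapExp_le (hμ : ∀ᵐ x ∂μ, 0 ≤ x) (hlam : 0 ≤ lam) {z : ℂ} (hz : 0 ≤ z.re) :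
    (lapExp a lam μ z).re ≤ realLapExp a lam μ z.re := by
  have hint := integrable_cexp_neg_mul_sub_one hμ hz
  have hre : (∫ x : ℝ, (Complex.exp (-(x * z)) - 1) ∂μ).re
      ≤ ∫ x, (Real.exp (-(x * z.re)) - 1) ∂μ := by
    rw [show (∫ x : ℝ, (Complex.exp (-(x * z)) - 1) ∂μ).re
      = ∫ x : ℝ, (Complex.exp (-(x * z)) - 1).re ∂μ from (integral_re hint).symm]
    refine integral_mono hint.re (integrable_exp_neg_mul_sub_one hμ hz) fun x => ?_
    have h := Complex.re_le_norm (Complex.exp (-(x * z)))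
    rw [Complex.norm_exp] at h
    simpa using h
  simp only [lapExp, realLapExp, Complex.add_re, Complex.mul_re, Complex.ofReal_re,
    Complex.ofReal_im, zero_mul, sub_zero]
  gcongr

theorem realLapExp_le_div_mul (hμ : ∀ᵐ x ∂μ, 0 ≤ x) (hlam : 0 ≤ lam) {r c : ℝ} (hr : 0 ≤ r)
    (hrc : r ≤ c) (hc : 0 < c) : realLapExp a lam μ r ≤ r / c * realLapExp a lam μ c := by
  have h : ∫ x, (Real.exp (-(x * r)) - 1) ∂μ ≤ r / c * ∫ x, (Real.exp (-(x * c)) - 1) ∂μ := by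
    rw [← integral_const_mul]
    exact integral_mono (integrable_exp_neg_mul_sub_one hμ hr)
      ((integrable_exp_neg_mul_sub_one hμ hc.le).const_mul _)
      fun x => Real.exp_neg_mul_sub_one_le_div_mul hr hrc hc
  have hrc' : r / c * (a * c) = a * r := by field_simp
  rw [realLapExp, realLapExp, mul_add, hrc']
  nlinarith

theorem realLapExp_le_mul_deriv (hμ : ∀ᵐ x ∂μ, 0 ≤ x) (hlam : 0 ≤ lam) {c : ℝ} (hc : 0 < c) :
    realLapExp a lam μ c ≤ c * (a - lam * ∫ x, x * Real.exp (-(x * c)) ∂μ) := by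
  have h : c * ∫ x, x * Real.exp (-(x * c)) ∂μ ≤ -∫ x, (Real.exp (-(x * c)) - 1) ∂μ := by
    rw [← integral_const_mul, ← integral_neg]
    refine integral_mono ((integrable_mul_exp_neg_mul hμ hc).const_mul c)
      (integrable_exp_neg_mul_sub_one hμ hc.le).neg fun x => ?_
    have := Real.mul_exp_neg_le_one_sub_exp_neg (x * c)
    simp only [neg_sub]
    linarith
  rw [realLapExp]
  nlinarith

theorem mul_norm_sub_le_norm_lapExp_sub (hμ : ∀ᵐ x ∂μ, 0 ≤ x) (hlam : 0 ≤ lam) {c : ℝ}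
    (hc : 0 < c) {z : ℂ} (hcz : c ≤ z.re) :
    (a - lam * ∫ x, x * Real.exp (-(x * c)) ∂μ) * ‖z - c‖
      ≤ ‖lapExp a lam μ z - lapExp a lam μ c‖ := by
  set M := ∫ x, x * Real.exp (-(x * c)) ∂μ
  set Iz := ∫ x : ℝ, (Complex.exp (-(x * z)) - 1) ∂μ
  set Ic := ∫ x : ℝ, (Complex.exp (-(x * c)) - 1) ∂μ
  have hIz := integrable_cexp_neg_mul_sub_one hμ (hc.le.trans hcz)
  have hIc := integrable_cexp_neg_mul_sub_one hμ (z := c) (by simpa using hc.le)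
  have hdiff : ‖Ic - Iz‖ ≤ M * ‖z - c‖ := by
    rw [← integral_sub hIc hIz, ← integral_mul_const]
    refine (norm_integral_le_integral_norm _).trans
      (integral_mono_ae (hIc.sub hIz).norm ((integrable_mul_exp_neg_mul hμ hc).mul_const _) ?_)
    filter_upwards [hμ] with x hx
    simpa using norm_cexp_neg_mul_sub_cexp_neg_mul_le hx (w := c) (by simpa using hcz)
  have hsplit : lapExp a lam μ z - lapExp a lam μ c = a * (z - c) - lam * (Ic - Iz) := by
    simp only [lapExp, Iz, Ic]; ring
  have hlower := norm_sub_norm_le (a * (z - c) : ℂ) (lam * (Ic - Iz))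
  rw [← hsplit, norm_mul, norm_mul, Complex.norm_real, Complex.norm_real,
    Real.norm_of_nonneg hlam] at hlower
  have h1 := mul_le_mul_of_nonneg_left hdiff hlam
  have h2 := mul_le_mul_of_nonneg_right (Real.le_norm_self a) (norm_nonneg (z - c))
  nlinarith

end LaplaceExponent

/-- for `k(z) = a z + λ ∫₀^∞ (e^{-xz} - 1) dF(x)` with `a, λ > 0` and `F`
the distribution of a strictly positive random variable, for every `s > 0` the equation
`k(z) = s` has exactly one root in the half-plane `Re z > 0`, and this root is real
and positive. -/
theorem statement18
    (a lam : ℝ) (ha : 0 < a) (hlam : 0 < lam)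
    (μ : Measure ℝ) [IsProbabilityMeasure μ] (hμ : μ (Set.Iic 0) = 0)
    (s : ℝ) (hs : 0 < s) :
    ∃ c : ℝ, 0 < c ∧ lapExp a lam μ ((c : ℝ) : ℂ) = s ∧
      ∀ z : ℂ, 0 < z.re → lapExp a lam μ z = s → z = c := by
  have hμ₀ : ∀ᵐ x ∂μ, 0 ≤ x :=
    ae_iff.2 (measure_mono_null (fun x hx => le_of_lt (not_le.1 hx)) hμ)
  obtain ⟨c, hc₀, hkc⟩ := exists_realLapExp_eq hμ₀ ha hlam.le hs.le
  have hc : 0 < c := hc₀.lt_of_ne fun h => by rw [← h, realLapExp_zero] at hkc; linarith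
  refine ⟨c, hc, by rw [lapExp_ofReal, hkc], fun z hz hkz => ?_⟩
  have hsz : s ≤ realLapExp a lam μ z.re := by
    simpa [hkz] using re_lapExp_le (a := a) hμ₀ hlam.le hz.le
  have hcz : c ≤ z.re := by
    by_contra! hzc
    have hk := realLapExp_le_div_mul (a := a) hμ₀ hlam.le hz.le hzc.le hc
    have hθ : z.re / c < 1 := (div_lt_one hc).2 hzc
    rw [hkc] at hk
    nlinarith
  have hderiv : 0 < a - lam * ∫ x, x * Real.exp (-(x * c)) ∂μ :=
    pos_of_mul_pos_right (hs.trans_le (hkc ▸ realLapExp_le_mul_deriv hμ₀ hlam.le hc)) hc.le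
  have hlip := mul_norm_sub_le_norm_lapExp_sub (a := a) hμ₀ hlam.le hc hcz
  rw [hkz, lapExp_ofReal, hkc, sub_self, norm_zero] at hlip
  exact sub_eq_zero.1 (norm_le_zero_iff.1 (nonpos_of_mul_nonpos_right hlip hderiv))
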